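/- arXiv:1907.07839 — 4 statements merged into one kernel-verified Lean document; each statement's English description precedes it below -/
import Mathlib

section
/- For any real number Q > 1, the unit ball 𝕋 = {α ∈ K_∞ : |α| < 1} is the disjoint union, over monic polynomials r ∈ F_q[t] with |r| ≤ q^Q and polynomials a with |a| < |r| and gcd(a,r) = 1, of the sets {α ∈ 𝕋 : |rα − a| < q^{-Q}}. -/
/-!
Common setup: `K_∞ = 𝔽_q((1/t))` is modeled as `LaurentSeries Fq` in the variable `X = 1/t`,
so that an element `Σ_{i ≤ N} a_i t^i` of `K_∞` corresponds to the Hahn series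
`Σ_{n ≥ -N} a_{-n} X^n`.  The degree in `t` is the negative of the Hahn-series order,
the absolute value is `|α| = q^{deg_t α}`, and the standard additive character is
`ψ(α) = e_q(coefficient of t^{-1}) = e_q(coefficient of X^1)`.
-/

open scoped BigOperators Classical
noncomputable section



namespace FF

variable {Fq : Type*} [Field Fq] [Fintype Fq]

/-- The element `t = X⁻¹` of `K_∞`. -/
def tK : LaurentSeries Fq := HahnSeries.single (-1 : ℤ) 1

/-- Degree in `t` of a Laurent series (degree of `0` is `0` by convention). -/
def tdeg (α : LaurentSeries Fq) : ℤ := -α.order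

/-- The absolute value `|α| = q^{deg_t α}` on `K_∞`, with `|0| = 0`. -/
def absv (α : LaurentSeries Fq) : ℝ :=
  if α = 0 then 0 else (Fintype.card Fq : ℝ) ^ (-α.order)

/-- The embedding `𝔽_q[t] → K_∞`. -/
def toK (p : Polynomial Fq) : LaurentSeries Fq := Polynomial.eval₂ HahnSeries.C tK p

/-- The standard additive character `ψ` of `K_∞` attached to a character `e` of `𝔽_q`. -/
def psi (e : AddChar Fq ℂ) (α : LaurentSeries Fq) : ℂ := e (α.coeff 1)

/-- The polynomial `Σ_{i<N} c_i t^i` attached to a coefficient tuple. -/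
def polyOf {N : ℕ} (c : Fin N → Fq) : Polynomial Fq :=
  ∑ i : Fin N, Polynomial.C (c i) * Polynomial.X ^ (i : ℕ)

/-- Absolute value of a polynomial: `|p| = q^{deg p}`, `|0| = 0`. -/
def absP (p : Polynomial Fq) : ℝ :=
  if p = 0 then 0 else (Fintype.card Fq : ℝ) ^ p.natDegree

/-- The part `((γ))` of `γ` supported in strictly negative `t`-degrees. -/
def fracPart (γ : LaurentSeries Fq) : LaurentSeries Fq where
  coeff n := if 1 ≤ n then γ.coeff n else 0
  isPWO_support' := γ.isPWO_support'.mono (fun n hn => by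
    by_cases h : (1 : ℤ) ≤ n <;> simp_all [Function.support])

/-- A canonical choice of inverse of `x` modulo `c` (junk value `0` if not coprime). -/
def modInv (x c : Polynomial Fq) : Polynomial Fq :=
  if h : IsCoprime x c then h.choose else 0

/-- Riemann sums approximating the Haar integral (normalized by `μ(𝕋) = 1`) of `w`
over the ball `{|α| < q^Y}`, at resolution `M`: the ball is partitioned into `q^M`
sub-balls of measure `q^{Y-M}` with representatives `Σ_{0 ≤ j < M} c_j t^{Y-1-j}`. -/
def ballSum (Y : ℤ) (M : ℕ) (w : LaurentSeries Fq → ℂ) : ℂ :=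
  ((Fintype.card Fq : ℂ) ^ Y * ((Fintype.card Fq : ℂ) ^ M)⁻¹) *
    ∑ c : Fin M → Fq, w (∑ j : Fin M, HahnSeries.single ((1 : ℤ) - Y + (j : ℕ)) (c j))

/-- Riemann sums approximating the Haar integral of `w` over `𝕋^d` at resolution `M`. -/
def cubeSum (d M : ℕ) (w : (Fin d → LaurentSeries Fq) → ℂ) : ℂ :=
  (((Fintype.card Fq : ℂ) ^ (d * M))⁻¹) *
    ∑ c : Fin d → Fin M → Fq,
      w (fun i => ∑ j : Fin M, HahnSeries.single (((j : ℕ) : ℤ) + 1) (c i j))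

end FF

/-!
Existence is Dirichlet's theorem. With `N = ⌊Q⌋`, the coefficients of `t⁻¹, …, t⁻ᴺ` in `rα`
depend linearly on the `N + 1` coefficients of a polynomial `r` of degree `≤ N`, so some
`r ≠ 0` kills all of them; subtracting the polynomial part `a` of `rα` leaves
`|rα - a| ≤ q^{-N-1} < q^{-Q}`, and dividing `r` and `a` by their gcd and by the leading
coefficient of `r` does not increase this error. The condition `|a| < |r|` then follows from
`|α| < 1`. Uniqueness: for two such pairs, `r₁a₂ - r₂a₁ = r₂(r₁α - a₁) - r₁(r₂α - a₂)` is a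
polynomial of absolute value `< 1`, hence `0`, and coprimality and monicity force equality.
-/

namespace Polynomial

variable {K : Type*} [Field K]

theorem exists_eq_mul_monic_isCoprime (a r : K[X]) (hr : r ≠ 0) :
    ∃ d a' r' : K[X], a = d * a' ∧ r = d * r' ∧ r'.Monic ∧ IsCoprime a' r' := by
  classical
  obtain ⟨a₀, r₀, ha, hr₀, hunit⟩ := extract_gcd a r
  have hr₀ne : r₀ ≠ 0 := right_ne_zero_of_mul (a := gcd a r) (by rwa [← hr₀])
  have hlc : r₀.leadingCoeff ≠ 0 := leadingCoeff_ne_zero.2 hr₀ne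
  have hC : C r₀.leadingCoeff * C r₀.leadingCoeff⁻¹ = 1 := by
    rw [← C_mul, mul_inv_cancel₀ hlc, C_1]
  refine ⟨gcd a r * C r₀.leadingCoeff, a₀ * C r₀.leadingCoeff⁻¹, r₀ * C r₀.leadingCoeff⁻¹,
    ?_, ?_, monic_mul_leadingCoeff_inv hr₀ne, ?_⟩
  · rwa [mul_mul_mul_comm, hC, mul_one]
  · rwa [mul_mul_mul_comm, hC, mul_one]
  · exact (isCoprime_mul_unit_right (isUnit_C.2 (inv_ne_zero hlc).isUnit) _ _).2
      ((gcd_isUnit_iff _ _).1 hunit)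

end Polynomial

namespace FF

variable {Fq : Type*} [Field Fq]

lemma toK_add (p p' : Polynomial Fq) : toK (p + p') = toK p + toK p' :=
  Polynomial.eval₂_add _ _

lemma toK_sub (p p' : Polynomial Fq) : toK (p - p') = toK p - toK p' :=
  Polynomial.eval₂_sub _

lemma toK_mul (p p' : Polynomial Fq) : toK (p * p') = toK p * toK p' :=
  Polynomial.eval₂_mul _ _

lemma toK_smul (c : Fq) (p : Polynomial Fq) : toK (c • p) = c • toK p := by
  rw [Polynomial.smul_eq_C_mul, toK, Polynomial.eval₂_mul, Polynomial.eval₂_C,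
    HahnSeries.C_mul_eq_smul, toK]

lemma coeff_toK (p : Polynomial Fq) (n : ℤ) :
    (toK p).coeff n = if n ≤ 0 then p.coeff (-n).toNat else 0 := by
  induction p using Polynomial.induction_on' with
  | add p p' hp hp' =>
    rw [toK_add, HahnSeries.coeff_add, hp, hp']
    split_ifs <;> simp
  | monomial i c =>
    rw [toK, Polynomial.eval₂_monomial, tK, HahnSeries.single_pow, one_pow,
      show (HahnSeries.C c : LaurentSeries Fq) = HahnSeries.single 0 c from rfl,
      HahnSeries.single_mul_single, mul_one, zero_add, nsmul_eq_mul, mul_neg_one,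
      HahnSeries.coeff_single, Polynomial.coeff_monomial]
    split_ifs <;> first | rfl | omega

lemma coeff_toK_neg_natDegree (p : Polynomial Fq) :
    (toK p).coeff (-p.natDegree) = p.leadingCoeff := by
  rw [coeff_toK, if_pos (by omega), neg_neg, Int.toNat_natCast, Polynomial.leadingCoeff]

lemma toK_ne_zero {p : Polynomial Fq} (hp : p ≠ 0) : toK p ≠ 0 :=
  HahnSeries.ne_zero_of_coeff_ne_zero
    ((coeff_toK_neg_natDegree p).trans_ne (Polynomial.leadingCoeff_ne_zero.2 hp))

lemma order_toK {p : Polynomial Fq} (hp : p ≠ 0) : (toK p).order = -p.natDegree := by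
  refine le_antisymm (HahnSeries.order_le_of_coeff_ne_zero ?_)
    ((HahnSeries.le_order_iff_forall (toK_ne_zero hp)).2 fun n hn => ?_)
  · rw [coeff_toK_neg_natDegree p]
    exact Polynomial.leadingCoeff_ne_zero.2 hp
  · rw [coeff_toK, if_pos (by omega)]
    exact Polynomial.coeff_eq_zero_of_natDegree_lt (by omega)

lemma exists_coeff_sub_toK_eq_zero (β : LaurentSeries Fq) :
    ∃ a : Polynomial Fq, ∀ n ≤ 0, (β - toK a).coeff n = 0 := by
  let M := (-β.order).toNat
  refine ⟨∑ i ∈ Finset.range (M + 1), Polynomial.monomial i (β.coeff (-i)), fun n hn => ?_⟩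
  rw [HahnSeries.coeff_sub, coeff_toK, if_pos hn, Polynomial.finsetSum_coeff]
  simp only [Polynomial.coeff_monomial, Finset.sum_ite_eq', Finset.mem_range]
  split_ifs with hM
  · rw [Int.toNat_of_nonneg (by omega), neg_neg, sub_self]
  · rw [HahnSeries.coeff_eq_zero_of_lt_order (by omega), sub_zero]

lemma exists_ne_zero_natDegree_le_coeff_toK_mul_eq_zero (α : LaurentSeries Fq) (N : ℕ) :
    ∃ r : Polynomial Fq, r ≠ 0 ∧ r.natDegree ≤ N ∧
      ∀ n : ℤ, 1 ≤ n → n ≤ N → (toK r * α).coeff n = 0 := by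
  let coeffs : Polynomial Fq →ₗ[Fq] Fin N → Fq :=
    { toFun p j := (toK p * α).coeff ((j : ℕ) + 1)
      map_add' p p' := by ext j; simp [toK_add, add_mul]
      map_smul' c p := by
        ext j
        rw [toK_smul, ← HahnSeries.C_mul_eq_smul, mul_assoc, HahnSeries.C_mul_eq_smul]
        rfl }
  let f := coeffs ∘ₗ (Polynomial.degreeLT Fq (N + 1)).subtype ∘ₗ
    (Polynomial.degreeLTEquiv Fq (N + 1)).symm.toLinearMap
  obtain ⟨c, hc, hc0⟩ := (Submodule.ne_bot_iff _).1 <|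
    LinearMap.ker_ne_bot_of_finrank_lt (f := f) (by simp)
  let r := (Polynomial.degreeLTEquiv Fq (N + 1)).symm c
  refine ⟨r, ?_, ?_, fun n hn hnN => ?_⟩
  · simpa [r] using hc0
  · exact Polynomial.natDegree_le_iff_degree_le.2 <|
      Polynomial.mem_degreeLE.1 (Polynomial.degreeLT_succ_eq_degreeLE (R := Fq) ▸ r.2)
  · obtain ⟨j, rfl⟩ : ∃ j : ℕ, n = j + 1 := ⟨(n - 1).toNat, by omega⟩
    exact congrFun (LinearMap.mem_ker.1 hc) ⟨j, by omega⟩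

variable [Fintype Fq]

lemma one_lt_card_real : (1 : ℝ) < Fintype.card Fq := by
  exact_mod_cast Fintype.one_lt_card

@[simp]
lemma absv_zero : absv (0 : LaurentSeries Fq) = 0 := if_pos rfl

lemma absv_of_ne_zero {x : LaurentSeries Fq} (hx : x ≠ 0) :
    absv x = (Fintype.card Fq : ℝ) ^ (-x.order) := if_neg hx

lemma absv_nonneg (x : LaurentSeries Fq) : 0 ≤ absv x := by
  unfold absv
  split_ifs <;> positivity

@[simp]
lemma absv_neg (x : LaurentSeries Fq) : absv (-x) = absv x := by
  simp only [absv, neg_eq_zero, HahnSeries.order_neg]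

lemma absv_mul (x y : LaurentSeries Fq) : absv (x * y) = absv x * absv y := by
  rcases eq_or_ne x 0 with rfl | hx
  · simp
  rcases eq_or_ne y 0 with rfl | hy
  · simp
  rw [absv_of_ne_zero (mul_ne_zero hx hy), absv_of_ne_zero hx, absv_of_ne_zero hy,
    HahnSeries.order_mul hx hy, neg_add, zpow_add₀ (by positivity)]

lemma absv_add_le (x y : LaurentSeries Fq) : absv (x + y) ≤ max (absv x) (absv y) := by
  rcases eq_or_ne (x + y) 0 with hxy | hxy
  · simp [hxy, absv_nonneg]
  rcases eq_or_ne x 0 with rfl | hx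
  · simp [absv_nonneg]
  rcases eq_or_ne y 0 with rfl | hy
  · simp [absv_nonneg]
  have hmin := HahnSeries.min_order_le_order_add hxy
  have hq := (one_lt_card_real (Fq := Fq)).le
  rw [absv_of_ne_zero hxy, absv_of_ne_zero hx, absv_of_ne_zero hy]
  rcases le_total x.order y.order with h | h
  · rw [min_eq_left h] at hmin
    exact le_max_of_le_left (zpow_le_zpow_right₀ hq (neg_le_neg hmin))
  · rw [min_eq_right h] at hmin
    exact le_max_of_le_right (zpow_le_zpow_right₀ hq (neg_le_neg hmin))

lemma absv_sub_le (x y : LaurentSeries Fq) : absv (x - y) ≤ max (absv x) (absv y) := by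
  simpa only [sub_eq_add_neg, absv_neg] using absv_add_le x (-y)

lemma absv_le_zpow_of_coeff_eq_zero {x : LaurentSeries Fq} {m : ℤ}
    (h : ∀ n < m, x.coeff n = 0) : absv x ≤ (Fintype.card Fq : ℝ) ^ (-m) := by
  rcases eq_or_ne x 0 with rfl | hx
  · simp only [absv_zero]
    positivity
  rw [absv_of_ne_zero hx]
  exact zpow_le_zpow_right₀ one_lt_card_real.le
    (neg_le_neg ((HahnSeries.le_order_iff_forall hx).2 h))

lemma absv_toK {p : Polynomial Fq} (hp : p ≠ 0) :
    absv (toK p) = (Fintype.card Fq : ℝ) ^ p.natDegree := by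
  rw [absv_of_ne_zero (toK_ne_zero hp), order_toK hp, neg_neg, zpow_natCast]

lemma one_le_absv_toK {p : Polynomial Fq} (hp : p ≠ 0) : 1 ≤ absv (toK p) := by
  rw [absv_toK hp]
  exact one_le_pow₀ one_lt_card_real.le

lemma eq_zero_of_absv_toK_lt_one {p : Polynomial Fq} (h : absv (toK p) < 1) : p = 0 := by
  by_contra hp
  exact (one_le_absv_toK hp).not_gt h

lemma exists_absv_toK_mul_sub_toK_le (α : LaurentSeries Fq) (N : ℕ) :
    ∃ r a : Polynomial Fq, r ≠ 0 ∧ r.natDegree ≤ N ∧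
      absv (toK r * α - toK a) ≤ (Fintype.card Fq : ℝ) ^ (-(N + 1 : ℤ)) := by
  obtain ⟨r, hr, hdeg, hcoeff⟩ := exists_ne_zero_natDegree_le_coeff_toK_mul_eq_zero α N
  obtain ⟨a, ha⟩ := exists_coeff_sub_toK_eq_zero (toK r * α)
  refine ⟨r, a, hr, hdeg, absv_le_zpow_of_coeff_eq_zero fun n hn => ?_⟩
  by_cases hn0 : n ≤ 0
  · exact ha n hn0
  · rw [HahnSeries.coeff_sub, coeff_toK, if_neg hn0, sub_zero]
    exact hcoeff n (by omega) (by omega)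

lemma exists_monic_isCoprime_absv_mul_sub_le (α : LaurentSeries Fq) {r a : Polynomial Fq}
    (hr : r ≠ 0) :
    ∃ r' a' : Polynomial Fq, r'.Monic ∧ IsCoprime a' r' ∧ r'.natDegree ≤ r.natDegree ∧
      absv (toK r' * α - toK a') ≤ absv (toK r * α - toK a) := by
  obtain ⟨d, a', r', rfl, rfl, hmonic, hcop⟩ := Polynomial.exists_eq_mul_monic_isCoprime a r hr
  have hd : d ≠ 0 := left_ne_zero_of_mul hr
  refine ⟨r', a', hmonic, hcop, ?_, ?_⟩
  · rw [Polynomial.natDegree_mul hd hmonic.ne_zero]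
    exact Nat.le_add_left _ _
  · rw [toK_mul, toK_mul, mul_assoc, ← mul_sub, absv_mul]
    exact le_mul_of_one_le_left (absv_nonneg _) (one_le_absv_toK hd)

lemma exists_monic_isCoprime_absv_mul_sub_lt (α : LaurentSeries Fq) {Q : ℝ} (hQ : 0 ≤ Q) :
    ∃ r a : Polynomial Fq, r.Monic ∧ IsCoprime a r ∧
      (Fintype.card Fq : ℝ) ^ r.natDegree ≤ (Fintype.card Fq : ℝ) ^ Q ∧
      absv (toK r * α - toK a) < (Fintype.card Fq : ℝ) ^ (-Q) := by
  have hq := one_lt_card_real (Fq := Fq)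
  obtain ⟨r₀, a₀, hr₀, hdeg₀, happrox₀⟩ := exists_absv_toK_mul_sub_toK_le α ⌊Q⌋₊
  obtain ⟨r, a, hmonic, hcop, hdeg, happrox⟩ :=
    exists_monic_isCoprime_absv_mul_sub_le α (a := a₀) hr₀
  refine ⟨r, a, hmonic, hcop, ?_, happrox.trans_lt (happrox₀.trans_lt ?_)⟩
  · rw [← Real.rpow_natCast]
    exact Real.rpow_le_rpow_of_exponent_le hq.le
      ((Nat.cast_le.2 (hdeg.trans hdeg₀)).trans (Nat.floor_le hQ))
  · rw [← Real.rpow_intCast, Real.rpow_lt_rpow_left_iff hq]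
    push_cast
    linarith [Nat.lt_floor_add_one Q]

lemma absv_toK_lt_of_absv_mul_sub_lt_one {α : LaurentSeries Fq} (hα : absv α < 1)
    {r a : Polynomial Fq} (hr : r ≠ 0) (h : absv (toK r * α - toK a) < 1) :
    absv (toK a) < absv (toK r) := by
  have hr1 := one_le_absv_toK hr
  calc absv (toK a) = absv (toK r * α - (toK r * α - toK a)) := by rw [sub_sub_cancel]
    _ ≤ max (absv (toK r * α)) (absv (toK r * α - toK a)) := absv_sub_le _ _
    _ < absv (toK r) := max_lt
        (by rw [absv_mul]; exact mul_lt_of_lt_one_right (by linarith) hα) (h.trans_le hr1)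

lemma absv_toK_mul_lt_one {Q : ℝ} {r : Polynomial Fq} {x : LaurentSeries Fq} (hr : r ≠ 0)
    (hdeg : (Fintype.card Fq : ℝ) ^ r.natDegree ≤ (Fintype.card Fq : ℝ) ^ Q)
    (hx : absv x < (Fintype.card Fq : ℝ) ^ (-Q)) : absv (toK r * x) < 1 := by
  have hq := one_lt_card_real (Fq := Fq)
  calc absv (toK r * x) = absv (toK r) * absv x := absv_mul _ _
    _ < (Fintype.card Fq : ℝ) ^ Q * (Fintype.card Fq : ℝ) ^ (-Q) :=
        mul_lt_mul' (absv_toK hr ▸ hdeg) hx (absv_nonneg _) (by positivity)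
    _ = 1 := by rw [← Real.rpow_add (by linarith), add_neg_cancel, Real.rpow_zero]

lemma eq_of_absv_toK_mul_sub_toK_lt {Q : ℝ} {α : LaurentSeries Fq}
    {r₁ a₁ r₂ a₂ : Polynomial Fq}
    (hr₁ : r₁.Monic) (hr₂ : r₂.Monic) (ha₁ : IsCoprime a₁ r₁) (ha₂ : IsCoprime a₂ r₂)
    (hdeg₁ : (Fintype.card Fq : ℝ) ^ r₁.natDegree ≤ (Fintype.card Fq : ℝ) ^ Q)
    (hdeg₂ : (Fintype.card Fq : ℝ) ^ r₂.natDegree ≤ (Fintype.card Fq : ℝ) ^ Q)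
    (h₁ : absv (toK r₁ * α - toK a₁) < (Fintype.card Fq : ℝ) ^ (-Q))
    (h₂ : absv (toK r₂ * α - toK a₂) < (Fintype.card Fq : ℝ) ^ (-Q)) :
    r₁ = r₂ ∧ a₁ = a₂ := by
  have hcross : r₁ * a₂ = r₂ * a₁ := by
    refine sub_eq_zero.1 (eq_zero_of_absv_toK_lt_one ?_)
    have : toK (r₁ * a₂ - r₂ * a₁) =
        toK r₂ * (toK r₁ * α - toK a₁) - toK r₁ * (toK r₂ * α - toK a₂) := by
      rw [toK_sub, toK_mul, toK_mul]
      ring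
    rw [this]
    exact (absv_sub_le _ _).trans_lt (max_lt (absv_toK_mul_lt_one hr₂.ne_zero hdeg₂ h₁)
      (absv_toK_mul_lt_one hr₁.ne_zero hdeg₁ h₂))
  have hr : r₁ = r₂ := Polynomial.eq_of_monic_of_associated hr₁ hr₂ <| associated_of_dvd_dvd
    (ha₁.symm.dvd_of_dvd_mul_right ⟨a₂, hcross.symm⟩) (ha₂.symm.dvd_of_dvd_mul_right ⟨a₁, hcross⟩)
  subst hr
  exact ⟨rfl, (mul_left_cancel₀ hr₁.ne_zero hcross).symm⟩

end FF

open FF in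
/-- Farey dissection; Browning–Vishe Lemma 4.2.  For any real `Q > 1`,
the unit ball `𝕋 = {|α| < 1}` of `K_∞` is the disjoint union, over monic `r ∈ 𝔽_q[t]` with
`|r| ≤ q^Q` and `a` with `|a| < |r|`, `gcd(a,r) = 1`, of the sets `{α : |rα - a| < q^{-Q}}`:
i.e. every `α ∈ 𝕋` lies in exactly one such set. -/
theorem farey_dissection {Fq : Type*} [Field Fq] [Fintype Fq]
    (Q : ℝ) (hQ : 1 < Q) (α : LaurentSeries Fq) (hα : absv α < 1) :
    ∃! p : Polynomial Fq × Polynomial Fq,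
      (p.1.Monic ∧ ((Fintype.card Fq : ℝ) ^ p.1.natDegree ≤ (Fintype.card Fq : ℝ) ^ Q) ∧
        absv (toK p.2) < absv (toK p.1) ∧ IsCoprime p.2 p.1) ∧
      absv (toK p.1 * α - toK p.2) < (Fintype.card Fq : ℝ) ^ (-Q) := by
  obtain ⟨r, a, hr, ha, hdeg, happrox⟩ :=
    exists_monic_isCoprime_absv_mul_sub_lt α (zero_le_one.trans hQ.le)
  have happrox_lt_one : absv (toK r * α - toK a) < 1 :=
    happrox.trans (Real.rpow_lt_one_of_one_lt_of_neg one_lt_card_real (by linarith))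
  refine ⟨(r, a), ⟨⟨hr, hdeg, absv_toK_lt_of_absv_mul_sub_lt_one hα hr.ne_zero happrox_lt_one,
    ha⟩, happrox⟩, ?_⟩
  rintro ⟨r', a'⟩ ⟨⟨hr', hdeg', -, ha'⟩, happrox'⟩
  obtain ⟨rfl, rfl⟩ := eq_of_absv_toK_mul_sub_toK_lt hr' hr ha' ha hdeg' hdeg happrox' happrox
  rfl
end
end

section
/- Let q be odd, K_∞ = F_q((1/t)), 𝕋 = {|x| < 1}, and ψ the standard additive character. For f ∈ K_∞: if ord(f) = 2k with k ≥ 0, then ∫_𝕋 ψ(f u²) du = |f|^{-1/2}; if ord(f) = 2k−1 with k ≥ 1, then ∫_𝕋 ψ(f u²) du = |f|^{-1/2} ε_f, where ε_f = G(f)/|G(f)| and G(f) = Σ_{x∈F_q} e_q(a_f x²) with a_f the top coefficient of f; and if ord(f) ≤ −1, the integral equals 1. -/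
/-!
Common setup: `K_∞ = 𝔽_q((1/t))` is modeled as `LaurentSeries Fq` in the variable `X = 1/t`,
so that an element `Σ_{i ≤ N} a_i t^i` of `K_∞` corresponds to the Hahn series
`Σ_{n ≥ -N} a_{-n} X^n`.  The degree in `t` is the negative of the Hahn-series order,
the absolute value is `|α| = q^{deg_t α}`, and the standard additive character is
`ψ(α) = e_q(coefficient of t^{-1}) = e_q(coefficient of X^1)`.
-/

open scoped BigOperators Classical
noncomputable section

namespace FF
variable {Fq : Type*} [Field Fq] [Fintype Fq]

/-- The Gauss sum `G(f) = Σ_{x ∈ 𝔽_q} e_q(a_f x²)` attached to the top-degree (in `t`)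
coefficient `a_f` of `f`. -/
def gaussSumTop (e : AddChar Fq ℂ) (f : LaurentSeries Fq) : ℂ :=
  ∑ x : Fq, e (f.coeff f.order * x ^ 2)

/-- The normalized Gauss sum `ε_f = G(f)/|G(f)|`. -/
def epsFactor (e : AddChar Fq ℂ) (f : LaurentSeries Fq) : ℂ :=
  gaussSumTop e f / ‖gaussSumTop e f‖

end FF

/-! With `u = Σ_{j<M} c_j t^{-1-j}`, the coefficient of `t^{-1}` in `f u²` is the Hankel
quadratic form `Σ_{i,j} b_{i+j} c_i c_j` in the coefficients `b_m` of `t^{m+1}` in `f`, so the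
`M`-th Riemann sum is `q^{-M}` times the character sum of this form over `𝔽_q^M`. If
`deg_t f = N ≥ 0`, then `b_m = 0` for `m ≥ N`, so the Riemann sums are constant from `M = N` on.
For `N ≥ 2` the variable `c_{N-1}` only occurs in the term `2 b_{N-1} c_0 c_{N-1}`: summing over
it forces `c_0 = 0` and gives a factor `q`, leaving the Hankel sum of `(b_{m+2})` in `N - 2`
variables. Iterating ends with the empty sum `1` if `N` is even and with the Gauss sum `G(f)` if
`N` is odd, and `|G(f)|² = q` by the usual substitution `x = y + d`. -/

namespace FF

open Finset Filter Topology

theorem sum_fin_succ_fun_cons {α S : Type*} [Fintype α] [AddCommMonoid S] {n : ℕ}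
    (g : (Fin (n + 1) → α) → S) :
    ∑ c, g c = ∑ x : α, ∑ c : Fin n → α, g (Fin.cons x c) := by
  rw [← (Fin.consEquiv fun _ => α).sum_comp, Fintype.sum_prod_type]
  rfl

theorem sum_fin_succ_fun_snoc {α S : Type*} [Fintype α] [AddCommMonoid S] {n : ℕ}
    (g : (Fin (n + 1) → α) → S) :
    ∑ c, g c = ∑ c : Fin n → α, ∑ y : α, g (Fin.snoc c y) := by
  rw [← (Fin.snocEquiv fun _ => α).sum_comp, Fintype.sum_prod_type, sum_comm]
  rfl

section HankelForm

variable {R : Type*} [CommRing R]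

def hankelForm (b : ℕ → R) {n : ℕ} (c : Fin n → R) : R :=
  ∑ i : Fin n, ∑ j : Fin n, b (i + j) * (c i * c j)

theorem hankelForm_cons (b : ℕ → R) {n : ℕ} (x : R) (c : Fin n → R) :
    hankelForm b (Fin.cons x c : Fin (n + 1) → R) =
      b 0 * x ^ 2 + 2 * x * ∑ j : Fin n, b (j + 1) * c j +
        hankelForm (fun m => b (m + 2)) c := by
  have hidx : ∀ i j : ℕ, i + 1 + (j + 1) = i + j + 2 := fun i j => by ring
  simp only [hankelForm, Fin.sum_univ_succ, Fin.cons_zero, Fin.cons_succ, Fin.val_zero,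
    Fin.val_succ, sum_add_distrib, hidx, zero_add, add_zero]
  have hcross : ∑ j : Fin n, b (j + 1) * (c j * x) + ∑ j : Fin n, b (j + 1) * (x * c j) =
      2 * x * ∑ j : Fin n, b (j + 1) * c j := by
    rw [← sum_add_distrib, mul_sum]
    exact sum_congr rfl fun j _ => by ring
  linear_combination hcross

theorem hankelForm_snoc_of_vanish {b : ℕ → R} {n : ℕ} (hb : ∀ m, n ≤ m → b m = 0)
    (c : Fin n → R) (y : R) :
    hankelForm b (Fin.snoc c y : Fin (n + 1) → R) = hankelForm b c := by
  simp [hankelForm, Fin.sum_univ_castSucc, hb]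

theorem hankelForm_cons_snoc {b : ℕ → R} {n : ℕ} (hb : ∀ m, n + 2 ≤ m → b m = 0)
    (x : R) (d : Fin n → R) (y : R) :
    hankelForm b (Fin.cons x (Fin.snoc d y : Fin (n + 1) → R) : Fin (n + 2) → R) =
      (b 0 * x ^ 2 + 2 * x * ∑ j : Fin n, b (j + 1) * d j +
        hankelForm (fun m => b (m + 2)) d) + y * (2 * b (n + 1) * x) := by
  rw [hankelForm_cons, hankelForm_snoc_of_vanish (fun m hm => hb (m + 2) (by omega)),
    Fin.sum_univ_castSucc]
  simp only [Fin.snoc_castSucc, Fin.snoc_last, Fin.val_castSucc, Fin.val_last]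
  ring

end HankelForm

section HankelSum

variable {R : Type*} [CommRing R] [Fintype R] {S : Type*} [CommRing S]

def hankelSum (e : AddChar R S) (b : ℕ → R) (n : ℕ) : S :=
  ∑ c : Fin n → R, e (hankelForm b c)

theorem hankelSum_zero (e : AddChar R S) (b : ℕ → R) : hankelSum e b 0 = 1 := by
  simp [hankelSum, hankelForm]

theorem hankelSum_succ_of_vanish (e : AddChar R S) {b : ℕ → R} {n : ℕ}
    (hb : ∀ m, n ≤ m → b m = 0) :
    hankelSum e b (n + 1) = Fintype.card R * hankelSum e b n := by
  simp [hankelSum, sum_fin_succ_fun_snoc, hankelForm_snoc_of_vanish hb, mul_sum]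

theorem hankelSum_add_of_vanish (e : AddChar R S) {b : ℕ → R} {n : ℕ}
    (hb : ∀ m, n ≤ m → b m = 0) (l : ℕ) :
    hankelSum e b (n + l) = (Fintype.card R : S) ^ l * hankelSum e b n := by
  induction l with
  | zero => simp
  | succ l ih =>
    rw [← add_assoc, hankelSum_succ_of_vanish e (fun m hm => hb m (by omega)), ih]
    ring

def quadGaussSum (e : AddChar R S) (a : R) : S :=
  ∑ x : R, e (a * x ^ 2)

theorem hankelSum_one (e : AddChar R S) (b : ℕ → R) :
    hankelSum e b 1 = quadGaussSum e (b 0) := by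
  simp [hankelSum, quadGaussSum, sum_fin_succ_fun_cons, hankelForm, sq]

end HankelSum

section Field

variable {F : Type*} [Field F] [Fintype F] {S : Type*} [CommRing S] [IsDomain S]
  {e : AddChar F S}

theorem sum_addChar_add_mul (he : e ≠ 1) (a b : F) :
    ∑ y : F, e (a + y * b) = if b = 0 then Fintype.card F * e a else 0 := by
  simp_rw [AddChar.map_add_eq_mul, ← mul_sum,
    AddChar.sum_mulShift b (AddChar.IsPrimitive.of_ne_one he)]
  split_ifs <;> ring

theorem hankelSum_add_two (he : e ≠ 1) (h2 : (2 : F) ≠ 0) {b : ℕ → F} {n : ℕ}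
    (hb : ∀ m, n + 2 ≤ m → b m = 0) (htop : b (n + 1) ≠ 0) :
    hankelSum e b (n + 2) = Fintype.card F * hankelSum e (fun m => b (m + 2)) n := by
  simp only [hankelSum, sum_fin_succ_fun_cons (n := n + 1), sum_fin_succ_fun_snoc (n := n),
    hankelForm_cons_snoc hb, sum_addChar_add_mul he, mul_eq_zero, h2, htop, false_or]
  rw [sum_comm]
  simp [mul_sum]

theorem hankelSum_eq (he : e ≠ 1) (h2 : (2 : F) ≠ 0) {n : ℕ} {b : ℕ → F}
    (hb : ∀ m, n ≤ m → b m = 0) (htop : ∀ m, m + 1 = n → b m ≠ 0) :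
    hankelSum e b n =
      (Fintype.card F : S) ^ (n / 2) * if Even n then 1 else quadGaussSum e (b (n - 1)) := by
  induction n using Nat.twoStepInduction generalizing b with
  | zero => simp [hankelSum_zero]
  | one => simp [hankelSum_one]
  | more n ih _ =>
    rw [hankelSum_add_two he h2 hb (htop (n + 1) rfl),
      ih (fun m hm => hb (m + 2) (by omega)) (fun m hm => htop (m + 2) (by omega)),
      Nat.add_div_right n two_pos, pow_succ]
    rcases Nat.even_or_odd' n with ⟨k, rfl | rfl⟩
    · simp [parity_simps]
      ring
    · simp [parity_simps, show 2 * k + 1 + 2 - 1 = 2 * k + 2 by omega]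
      ring

theorem quadGaussSum_mul_quadGaussSum_neg (he : e ≠ 1) (h2 : (2 : F) ≠ 0) {a : F}
    (ha : a ≠ 0) : quadGaussSum e a * quadGaussSum e (-a) = Fintype.card F := by
  have hshift : ∀ y : F, ∑ x : F, e (a * x ^ 2 + -a * y ^ 2) =
      ∑ d : F, e (a * d ^ 2 + y * (2 * a * d)) := fun y => by
    refine Fintype.sum_equiv (Equiv.subRight y) _ _ fun x => ?_
    rw [Equiv.subRight_apply]
    ring_nf
  simp_rw [quadGaussSum, sum_mul_sum, ← AddChar.map_add_eq_mul]
  rw [sum_comm]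
  simp_rw [hshift]
  rw [sum_comm]
  simp [sum_addChar_add_mul he, h2, ha]

end Field

theorem norm_quadGaussSum {F : Type*} [Field F] [Fintype F] {e : AddChar F ℂ} (he : e ≠ 1)
    (h2 : (2 : F) ≠ 0) {a : F} (ha : a ≠ 0) : ‖quadGaussSum e a‖ = √(Fintype.card F) := by
  have hconj : starRingEnd ℂ (quadGaussSum e a) = quadGaussSum e (-a) := by
    simp [quadGaussSum, map_sum, ← AddChar.map_neg_eq_conj]
  have hsq := quadGaussSum_mul_quadGaussSum_neg he h2 ha
  rw [← hconj, Complex.mul_conj, Complex.normSq_eq_norm_sq] at hsq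
  rw [← Real.sqrt_sq (norm_nonneg _)]
  exact congrArg Real.sqrt (by exact_mod_cast hsq)

theorem two_ne_zero_of_odd_card {F : Type*} [Field F] [Fintype F]
    (hq : Odd (Fintype.card F)) : (2 : F) ≠ 0 :=
  Ring.two_ne_zero fun h => by
    have := FiniteField.even_card_iff_char_two.mp h
    rw [Nat.odd_iff] at hq
    omega

theorem coeff_one_mul_sq_sum_single {R : Type*} [CommRing R] (f : LaurentSeries R) {n : ℕ}
    (c : Fin n → R) :
    (f * (∑ j : Fin n, HahnSeries.single (1 + ((j : ℕ) : ℤ)) (c j)) ^ 2).coeff 1 =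
      hankelForm (fun m : ℕ => f.coeff (-1 - m)) c := by
  have hsq : (∑ j : Fin n, HahnSeries.single (1 + ((j : ℕ) : ℤ)) (c j)) ^ 2 =
      ∑ i : Fin n, ∑ j : Fin n, HahnSeries.single (2 + ((i + j : ℕ) : ℤ)) (c i * c j) := by
    rw [sq, sum_mul_sum]
    refine sum_congr rfl fun i _ => sum_congr rfl fun j _ => ?_
    rw [HahnSeries.single_mul_single]
    congr 2
    push_cast
    ring
  simp only [hsq, mul_sum, HahnSeries.coeff_sum, HahnSeries.coeff_mul_single, hankelForm]
  refine sum_congr rfl fun i _ => sum_congr rfl fun j _ => ?_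
  ring_nf

section LaurentSeries

variable {Fq : Type*} [Field Fq] [Fintype Fq]

theorem ballSum_zero_psi_mul_sq (e : AddChar Fq ℂ) (f : LaurentSeries Fq) (M : ℕ) :
    ballSum 0 M (fun u => psi e (f * u ^ 2)) =
      ((Fintype.card Fq : ℂ) ^ M)⁻¹ * hankelSum e (fun m : ℕ => f.coeff (-1 - m)) M := by
  simp [ballSum, psi, hankelSum, coeff_one_mul_sq_sum_single]

theorem tendsto_ballSum_psi_mul_sq (e : AddChar Fq ℂ) (f : LaurentSeries Fq) {N : ℕ}
    (hN : ∀ m : ℕ, N ≤ m → f.coeff (-1 - m) = 0) :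
    Tendsto (fun M => ballSum 0 M (fun u => psi e (f * u ^ 2))) atTop
      (𝓝 (((Fintype.card Fq : ℂ) ^ N)⁻¹ *
        hankelSum e (fun m : ℕ => f.coeff (-1 - m)) N)) := by
  refine tendsto_const_nhds.congr' ?_
  filter_upwards [eventually_ge_atTop N] with M hM
  obtain ⟨l, rfl⟩ := Nat.exists_eq_add_of_le hM
  rw [ballSum_zero_psi_mul_sq, hankelSum_add_of_vanish e hN, pow_add]
  field_simp

theorem sqrt_absv_of_tdeg_eq {f : LaurentSeries Fq} (hf : f ≠ 0) {N : ℕ} (hN : tdeg f = N) :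
    √(absv f) = √(Fintype.card Fq : ℝ) ^ N := by
  rw [absv, if_neg hf, show -f.order = N from hN, zpow_natCast,
    Real.sqrt_eq_iff_mul_self_eq (by positivity) (by positivity), ← mul_pow,
    Real.mul_self_sqrt (Nat.cast_nonneg _)]

theorem norm_gaussSumTop {e : AddChar Fq ℂ} (he : e ≠ 1) (hq : Odd (Fintype.card Fq))
    {f : LaurentSeries Fq} (hf : f ≠ 0) : ‖gaussSumTop e f‖ = √(Fintype.card Fq : ℝ) :=
  norm_quadGaussSum he (two_ne_zero_of_odd_card hq) (mt HahnSeries.coeff_order_eq_zero.mp hf)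

theorem tendsto_ballSum_psi_mul_sq_of_tdeg_eq {e : AddChar Fq ℂ} (he : e ≠ 1)
    (hq : Odd (Fintype.card Fq)) {f : LaurentSeries Fq} (hf : f ≠ 0) {N : ℕ}
    (hN : tdeg f = N) :
    Tendsto (fun M => ballSum 0 M (fun u => psi e (f * u ^ 2))) atTop
      (𝓝 ((((√(absv f))⁻¹ : ℝ) : ℂ) * if Even N then 1 else epsFactor e f)) := by
  have hord : f.order = -N := by unfold tdeg at hN; omega
  have hb : ∀ m : ℕ, N ≤ m → f.coeff (-1 - m) = 0 := fun m hm =>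
    HahnSeries.coeff_eq_zero_of_lt_order (by omega)
  have htop : ∀ m : ℕ, m + 1 = N → f.coeff (-1 - m) ≠ 0 := fun m hm => by
    rw [show (-1 - m : ℤ) = f.order by omega]
    exact mt HahnSeries.coeff_order_eq_zero.mp hf
  convert tendsto_ballSum_psi_mul_sq e f hb using 2
  rw [hankelSum_eq he (two_ne_zero_of_odd_card hq) hb htop, sqrt_absv_of_tdeg_eq hf hN]
  set s := √(Fintype.card Fq : ℝ)
  have hsC : (Fintype.card Fq : ℂ) = (s : ℂ) ^ 2 := by
    exact_mod_cast (Real.sq_sqrt (Nat.cast_nonneg _)).symm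
  have hs0 : (s : ℂ) ≠ 0 := by
    have : 0 < s := Real.sqrt_pos.mpr (by exact_mod_cast Fintype.card_pos)
    exact_mod_cast this.ne'
  rw [hsC]
  rcases Nat.even_or_odd' N with ⟨k, rfl | rfl⟩
  · simp only [even_two_mul, if_true, Nat.mul_div_cancel_left k two_pos]
    push_cast
    field_simp
    ring
  · have hG : gaussSumTop e f = quadGaussSum e (f.coeff (-1 - ((2 * k : ℕ) : ℤ))) := by
      rw [gaussSumTop, quadGaussSum, hord,
        show -((2 * k + 1 : ℕ) : ℤ) = -1 - ((2 * k : ℕ) : ℤ) by push_cast; ring]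
    simp only [Nat.not_even_two_mul_add_one, if_false, Nat.add_sub_cancel, epsFactor,
      norm_gaussSumTop he hq hf, ← hG, show (2 * k + 1) / 2 = k by omega]
    push_cast
    field_simp
    ring

end LaurentSeries

end FF

open FF Filter in
/-- Gaussian integrals over `K_∞`.  Let `q` be odd, `f ∈ K_∞`, and let
`∫_𝕋 ψ(f u²) du` denote the Haar integral over `𝕋 = {|u| < 1}` (normalized to `μ(𝕋)=1`,
computed as the limit of its Riemann sums `ballSum 0`).  If `ord(f) = 2k` with `k ≥ 0` the
integral is `|f|^{-1/2}`; if `ord(f) = 2k-1` with `k ≥ 1` it is `|f|^{-1/2} ε_f`; and if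
`ord(f) ≤ -1` it is `1`. -/
theorem gaussian_integral {Fq : Type*} [Field Fq] [Fintype Fq]
    (hq : Odd (Fintype.card Fq)) (e : AddChar Fq ℂ) (he : e ≠ 1)
    (f : LaurentSeries Fq) (hf : f ≠ 0) :
    ((∃ k : ℕ, tdeg f = 2 * (k : ℤ)) →
      Tendsto (fun M : ℕ => ballSum 0 M (fun u => psi e (f * u ^ 2))) atTop
        (nhds (((Real.sqrt (absv f))⁻¹ : ℝ) : ℂ))) ∧
    ((∃ k : ℕ, 1 ≤ k ∧ tdeg f = 2 * (k : ℤ) - 1) →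
      Tendsto (fun M : ℕ => ballSum 0 M (fun u => psi e (f * u ^ 2))) atTop
        (nhds ((((Real.sqrt (absv f))⁻¹ : ℝ) : ℂ) * epsFactor e f))) ∧
    (tdeg f ≤ -1 →
      Tendsto (fun M : ℕ => ballSum 0 M (fun u => psi e (f * u ^ 2))) atTop
        (nhds 1)) := by
  refine ⟨fun ⟨k, hk⟩ => ?_, fun ⟨k, hk1, hk⟩ => ?_, fun hneg => ?_⟩
  · simpa using tendsto_ballSum_psi_mul_sq_of_tdeg_eq he hq hf (N := 2 * k) (by exact_mod_cast hk)
  · have hodd : ¬Even (2 * k - 1) := Nat.not_even_iff_odd.mpr ⟨k - 1, by omega⟩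
    simpa [hodd] using tendsto_ballSum_psi_mul_sq_of_tdeg_eq he hq hf (N := 2 * k - 1) (by omega)
  · have hvan : ∀ m : ℕ, 0 ≤ m → f.coeff (-1 - m) = 0 := fun m _ =>
      HahnSeries.coeff_eq_zero_of_lt_order (by unfold tdeg at hneg; omega)
    simpa [hankelSum_zero] using tendsto_ballSum_psi_mul_sq e f hvan
end
end

section
/- (Multiplicativity of quadratic exponential sums) Let G(x) = x^T B x with B ∈ M_d(F_q[t]) symmetric of nonzero determinant D, and for r coprime to D define S_r(G,c,c',e) = Σ*_{|a|<|r|} Σ_{b mod r} ψ((a(G(b) + ⟨c',b⟩ + e) − ⟨c,b⟩)/r). If r = uv with u, v coprime, then S_r(G,c,c',e) = S_u(G, v̄c, c', e) · S_v(G, ūc, c', e), where v̄ and ū denote inverses of v modulo u and u modulo v respectively. -/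
/-!
Common setup: `K_∞ = 𝔽_q((1/t))` is modeled as `LaurentSeries Fq` in the variable `X = 1/t`,
so that an element `Σ_{i ≤ N} a_i t^i` of `K_∞` corresponds to the Hahn series
`Σ_{n ≥ -N} a_{-n} X^n`.  The degree in `t` is the negative of the Hahn-series order,
the absolute value is `|α| = q^{deg_t α}`, and the standard additive character is
`ψ(α) = e_q(coefficient of t^{-1}) = e_q(coefficient of X^1)`.
-/

open scoped BigOperators Classical
noncomputable section



namespace FF
variable {Fq : Type*} [Field Fq] [Fintype Fq]

/-- The complete quadratic exponential sum
`S_r(G,c,c',e₀) = Σ*_{|a|<|r|} Σ_{b mod r} ψ((a(G(b) + ⟨c',b⟩ + e₀) − ⟨c,b⟩)/r)`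
attached to the quadratic form `G(x) = xᵀBx`; residues `a` and the coordinates of `b`
modulo `r` are enumerated by coefficient tuples of length `deg r`, and `Σ*` restricts to
`a` coprime to `r`. -/
def quadSum {d : ℕ} (e : AddChar Fq ℂ) (B : Matrix (Fin d) (Fin d) (Polynomial Fq))
    (r : Polynomial Fq) (c c' : Fin d → Polynomial Fq) (e₀ : Polynomial Fq) : ℂ :=
  ∑ a : Fin r.natDegree → Fq, ∑ b : Fin d → Fin r.natDegree → Fq,
    if IsCoprime (polyOf a) r then
      psi e (toK (polyOf a * ((∑ i, ∑ j, polyOf (b i) * B i j * polyOf (b j)) +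
          (∑ i, c' i * polyOf (b i)) + e₀) - ∑ i, c i * polyOf (b i)) / toK r)
    else 0

end FF

/-!
Writing `A, β` for the polynomials of `a, b`, the summand of `S_{uv}` is `ψ(X/(uv))` with
`X = A(G(β) + ⟨c',β⟩ + e₀) − ⟨c,β⟩`.  Since `v v̄ + u ū ≡ 1 (mod uv)`, one has
`X/(uv) ≡ v̄X/u + ūX/v` modulo polynomials, on which `ψ` is trivial, and `v̄X`, `ūX` are the
numerators of `S_u(G, v̄c, c', e₀)` and `S_v(G, ūc, c', e₀)` at `(v̄A, β)` and `(ūA, β)`.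
Each of these only depends on its arguments modulo `u` resp. `v`, and by the Chinese remainder
theorem `(A, β) ↦ ((v̄A mod u, β mod u), (ūA mod v, β mod v))` is a bijection that also matches
the coprimality conditions, so the double sum factors.
-/

namespace FF

section LaurentSeries

variable {Fq : Type*} [Field Fq]

def toKHom : Polynomial Fq →+* LaurentSeries Fq := Polynomial.eval₂RingHom HahnSeries.C tK

lemma coe_toKHom : ⇑(toKHom : Polynomial Fq →+* LaurentSeries Fq) = toK := rfl

lemma tK_pow (n : ℕ) : (tK : LaurentSeries Fq) ^ n = HahnSeries.single (-(n : ℤ)) 1 := by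
  induction n with
  | zero => simp [tK]
  | succ n ih =>
    rw [pow_succ, ih, tK, HahnSeries.single_mul_single, mul_one, Nat.cast_succ, neg_add]

lemma coeff_C_mul_tK_pow (a : Fq) (n : ℕ) (m : ℤ) :
    (HahnSeries.C a * (tK : LaurentSeries Fq) ^ n).coeff m = if m = -(n : ℤ) then a else 0 := by
  rw [tK_pow, HahnSeries.C_apply, HahnSeries.single_mul_single, HahnSeries.coeff_single]
  simp

lemma toK_coeff (p : Polynomial Fq) (m : ℤ) :
    (toK p).coeff m = if m ≤ 0 then p.coeff (-m).toNat else 0 := by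
  rw [toK, Polynomial.eval₂_eq_sum, Polynomial.sum, HahnSeries.coeff_sum]
  simp only [coeff_C_mul_tK_pow]
  split_ifs with hm
  · rw [Finset.sum_eq_single (-m).toNat (fun n _ hn => if_neg (by omega))
      (fun h => by rw [Polynomial.notMem_support_iff.mp h, ite_self]), if_pos (by omega)]
  · exact Finset.sum_eq_zero fun n _ => if_neg (by omega)

lemma toK_injective : Function.Injective (toK : Polynomial Fq → LaurentSeries Fq) := by
  intro p q h
  ext n
  simpa [toK_coeff] using congrArg (HahnSeries.coeff · (-(n : ℤ))) h

lemma psi_add (e : AddChar Fq ℂ) (α β : LaurentSeries Fq) :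
    psi e (α + β) = psi e α * psi e β := by
  rw [psi, psi, psi, HahnSeries.coeff_add, AddChar.map_add_eq_mul]

lemma psi_toK (e : AddChar Fq ℂ) (p : Polynomial Fq) : psi e (toK p) = 1 := by
  rw [psi, toK_coeff, if_neg one_pos.not_ge, AddChar.map_zero_eq_one]

lemma psi_toK_div_congr (e : AddChar Fq ℂ) {r x y : Polynomial Fq} (hr : r ≠ 0)
    (h : r ∣ x - y) : psi e (toK x / toK r) = psi e (toK y / toK r) := by
  obtain ⟨k, hk⟩ := h
  have hr' := toK_ne_zero hr
  have hsplit : toK x / toK r = toK y / toK r + toK k := by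
    rw [show x = y + r * k by linear_combination hk, ← coe_toKHom, map_add, map_mul,
      coe_toKHom]
    field_simp
  rw [hsplit, psi_add, psi_toK, mul_one]

/-- Partial fractions: `1/(uv) ≡ v'/u + u'/v` modulo polynomials. -/
lemma psi_toK_div_mul (e : AddChar Fq ℂ) {u v v' u' : Polynomial Fq} (hu : u ≠ 0) (hv : v ≠ 0)
    (h : u * v ∣ 1 - v * v' - u * u') (x : Polynomial Fq) :
    psi e (toK x / toK (u * v)) =
      psi e (toK (v' * x) / toK u) * psi e (toK (u' * x) / toK v) := by
  obtain ⟨w, hw⟩ := h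
  have hu' := toK_ne_zero hu
  have hv' := toK_ne_zero hv
  have hw' : 1 - toK v * toK v' - toK u * toK u' = toK u * toK v * toK w := by
    simpa only [← coe_toKHom, map_sub, map_mul, map_one] using congrArg toK hw
  have hsplit : toK x / toK (u * v) =
      toK (v' * x) / toK u + (toK (u' * x) / toK v + toK (x * w)) := by
    simp only [← coe_toKHom, map_mul]
    simp only [coe_toKHom]
    field_simp
    linear_combination toK x * hw'
  rw [hsplit, psi_add, psi_add, psi_toK, mul_one]

end LaurentSeries

section Residues

variable {Fq : Type*} [Field Fq]

lemma polyOf_coeff {N : ℕ} (c : Fin N → Fq) (j : Fin N) : (polyOf c).coeff j = c j := by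
  rw [polyOf, Polynomial.finsetSum_coeff, Finset.sum_eq_single j]
  · simp
  · intro i _ hij
    rw [Polynomial.coeff_C_mul_X_pow, if_neg (Fin.val_injective.ne hij.symm)]
  · simp

lemma polyOf_injective {N : ℕ} : Function.Injective (polyOf : (Fin N → Fq) → Polynomial Fq) :=
  fun a b h => funext fun j => by rw [← polyOf_coeff a, ← polyOf_coeff b, h]

lemma degree_polyOf_lt {N : ℕ} (c : Fin N → Fq) : (polyOf c).degree < N :=
  Polynomial.degree_sum_fin_lt c

lemma polyOf_coeff_eq_self {N : ℕ} {p : Polynomial Fq} (h : p.degree < N) :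
    polyOf (fun j : Fin N => p.coeff j) = p := by
  rcases eq_or_ne p 0 with rfl | hp
  · simp [polyOf]
  conv_rhs => rw [p.as_sum_range' N (Polynomial.natDegree_lt_iff_degree_lt hp |>.mpr h)]
  rw [polyOf, Fin.sum_univ_eq_sum_range (fun i => Polynomial.C (p.coeff i) * Polynomial.X ^ i)]
  simp only [Polynomial.C_mul_X_pow_eq_monomial]

/-- The residue of `p` modulo `r`, in the enumeration of residues used by `quadSum`. -/
def modTuple (r p : Polynomial Fq) : Fin r.natDegree → Fq := fun j => (p % r).coeff j

lemma polyOf_modTuple {r : Polynomial Fq} (hr : r ≠ 0) (p : Polynomial Fq) :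
    polyOf (modTuple r p) = p % r :=
  polyOf_coeff_eq_self <| (EuclideanDomain.mod_lt p hr).trans_eq (Polynomial.degree_eq_natDegree hr)

lemma dvd_sub_polyOf_modTuple {r : Polynomial Fq} (hr : r ≠ 0) (p : Polynomial Fq) :
    r ∣ p - polyOf (modTuple r p) := by
  rw [polyOf_modTuple hr, EuclideanDomain.mod_eq_sub_mul_div, sub_sub_cancel]
  exact dvd_mul_right r _

lemma dvd_sub_of_modTuple_eq {r p p' : Polynomial Fq} (hr : r ≠ 0)
    (h : modTuple r p = modTuple r p') : r ∣ p - p' := by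
  simpa [h] using dvd_sub (dvd_sub_polyOf_modTuple hr p) (dvd_sub_polyOf_modTuple hr p')

variable [Fintype Fq]

/-- Chinese remainder theorem, twisted by units `s mod u` and `t mod v`. -/
lemma bijective_modTuple_mul {u v s t : Polynomial Fq} (hu : u ≠ 0) (hv : v ≠ 0)
    (huv : IsCoprime u v) (hs : IsCoprime s u) (ht : IsCoprime t v) :
    Function.Bijective fun a : Fin (u * v).natDegree → Fq =>
      (modTuple u (s * polyOf a), modTuple v (t * polyOf a)) := by
  refine (Fintype.bijective_iff_injective_and_card _).mpr ⟨fun a a' h => ?_, ?_⟩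
  · obtain ⟨hau, hav⟩ := Prod.mk.inj h
    have hdu := dvd_sub_of_modTuple_eq hu hau
    have hdv := dvd_sub_of_modTuple_eq hv hav
    rw [← mul_sub] at hdu hdv
    have hdvd : u * v ∣ polyOf a - polyOf a' :=
      huv.mul_dvd (hs.symm.dvd_of_dvd_mul_left hdu) (ht.symm.dvd_of_dvd_mul_left hdv)
    have hdeg : (polyOf a - polyOf a').degree < (u * v).degree :=
      (Polynomial.degree_sub_le _ _).trans_lt <| by
        rw [Polynomial.degree_eq_natDegree (mul_ne_zero hu hv)]
        exact max_lt (degree_polyOf_lt a) (degree_polyOf_lt a')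
    exact polyOf_injective (sub_eq_zero.mp (Polynomial.eq_zero_of_dvd_of_degree_lt hdvd hdeg))
  · simp [Polynomial.natDegree_mul hu hv, pow_add]

end Residues

section QuadraticSums

lemma isCoprime_of_mul_dvd_one_sub {R : Type*} [CommRing R] {u v v' u' : R}
    (h : u * v ∣ 1 - v * v' - u * u') : IsCoprime v' u ∧ IsCoprime u' v := by
  obtain ⟨w, hw⟩ := h
  exact ⟨⟨v, u' + v * w, by linear_combination -hw⟩, ⟨u, v' + u * w, by linear_combination -hw⟩⟩

lemma sum_sum_mul_sum_sum_of_bijective {α αu αv β βu βv ι M : Type*} [Fintype α] [Fintype αu]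
    [Fintype αv] [Fintype β] [Fintype βu] [Fintype βv] [Fintype ι] [DecidableEq ι]
    [CommSemiring M] {φ : α → αu × αv} (hφ : Function.Bijective φ) {χ : β → βu × βv}
    (hχ : Function.Bijective χ) (f : αu → (ι → βu) → M) (g : αv → (ι → βv) → M) :
    ∑ a, ∑ b : ι → β, f (φ a).1 (fun i => (χ (b i)).1) * g (φ a).2 (fun i => (χ (b i)).2) =
      (∑ x, ∑ y, f x y) * ∑ x, ∑ y, g x y := by
  let E : (ι → β) ≃ (ι → βu) × (ι → βv) :=
    (Equiv.piCongrRight fun _ => Equiv.ofBijective χ hχ).trans (Equiv.arrowProdEquivProdArrow _ _ _)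
  calc _ = ∑ p : αu × αv, ∑ q : (ι → βu) × (ι → βv), f p.1 q.1 * g p.2 q.2 :=
        Fintype.sum_bijective φ hφ _ _ fun a => Fintype.sum_equiv E _ _ fun b => rfl
    _ = _ := by simp only [Fintype.sum_prod_type, Finset.sum_mul_sum]

variable {R : Type*} [CommRing R] {d : ℕ}

def quadNumerator (B : Matrix (Fin d) (Fin d) R) (c c' : Fin d → R) (e₀ A : R)
    (β : Fin d → R) : R :=
  A * ((∑ i, ∑ j, β i * B i j * β j) + (∑ i, c' i * β i) + e₀) - ∑ i, c i * β i

lemma quadNumerator_mul (B : Matrix (Fin d) (Fin d) R) (c c' : Fin d → R) (e₀ w A : R)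
    (β : Fin d → R) :
    quadNumerator B (fun i => w * c i) c' e₀ (w * A) β = w * quadNumerator B c c' e₀ A β := by
  simp only [quadNumerator, mul_assoc, ← Finset.mul_sum]
  ring

lemma dvd_quadNumerator_sub (B : Matrix (Fin d) (Fin d) R) (c c' : Fin d → R) (e₀ : R)
    {r A A' : R} {β β' : Fin d → R} (hA : r ∣ A - A') (hβ : ∀ i, r ∣ β i - β' i) :
    r ∣ quadNumerator B c c' e₀ A β - quadNumerator B c c' e₀ A' β' := by
  let π := Ideal.Quotient.mk (Ideal.span {r})
  have hπ : ∀ {x y : R}, r ∣ x - y ↔ π x = π y := by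
    intro x y
    rw [Ideal.Quotient.mk_eq_mk_iff_sub_mem, Ideal.mem_span_singleton]
  have hβ' : ∀ i, π (β i) = π (β' i) := fun i => hπ.mp (hβ i)
  rw [hπ] at hA ⊢
  simp only [quadNumerator, map_sub, map_mul, map_add, map_sum, hA, hβ']

variable {Fq : Type*} [Field Fq]

def quadTerm (e : AddChar Fq ℂ) (B : Matrix (Fin d) (Fin d) (Polynomial Fq))
    (r : Polynomial Fq) (c c' : Fin d → Polynomial Fq) (e₀ A : Polynomial Fq)
    (β : Fin d → Polynomial Fq) : ℂ :=
  if IsCoprime A r then psi e (toK (quadNumerator B c c' e₀ A β) / toK r) else 0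

variable (e : AddChar Fq ℂ) (B : Matrix (Fin d) (Fin d) (Polynomial Fq))
  (c c' : Fin d → Polynomial Fq) (e₀ : Polynomial Fq)

lemma quadSum_eq_sum_quadTerm [Fintype Fq] (r : Polynomial Fq) :
    quadSum e B r c c' e₀ =
      ∑ a : Fin r.natDegree → Fq, ∑ b : Fin d → Fin r.natDegree → Fq,
        quadTerm e B r c c' e₀ (polyOf a) fun i => polyOf (b i) :=
  rfl

lemma quadTerm_congr {r A A' : Polynomial Fq} {β β' : Fin d → Polynomial Fq} (hr : r ≠ 0)
    (hA : r ∣ A - A') (hβ : ∀ i, r ∣ β i - β' i) :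
    quadTerm e B r c c' e₀ A β = quadTerm e B r c c' e₀ A' β' := by
  have hcop : IsCoprime A r ↔ IsCoprime A' r := by
    obtain ⟨k, hk⟩ := hA
    rw [show A = A' + r * k by linear_combination hk, IsCoprime.add_mul_left_left_iff]
  simp only [quadTerm, hcop, psi_toK_div_congr e hr (dvd_quadNumerator_sub B c c' e₀ hA hβ)]

lemma quadTerm_mul {u v v' u' : Polynomial Fq} (hu : u ≠ 0) (hv : v ≠ 0)
    (h : u * v ∣ 1 - v * v' - u * u') (A : Polynomial Fq) (β : Fin d → Polynomial Fq) :
    quadTerm e B (u * v) c c' e₀ A β =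
      quadTerm e B u (fun i => v' * c i) c' e₀ (v' * A) β *
        quadTerm e B v (fun i => u' * c i) c' e₀ (u' * A) β := by
  obtain ⟨hv', hu'⟩ := isCoprime_of_mul_dvd_one_sub h
  have hcop : IsCoprime A (u * v) ↔ IsCoprime (v' * A) u ∧ IsCoprime (u' * A) v := by
    simp only [IsCoprime.mul_right_iff, IsCoprime.mul_left_iff, hv', hu', true_and]
  by_cases hA : IsCoprime A (u * v)
  · simp only [quadTerm, if_pos hA, if_pos (hcop.mp hA).1, if_pos (hcop.mp hA).2,
      quadNumerator_mul, psi_toK_div_mul e hu hv h]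
  · rcases not_and_or.mp (hcop.not.mp hA) with h' | h' <;> simp [quadTerm, hA, h']

end QuadraticSums

lemma mul_dvd_one_sub_modInv {Fq : Type*} [Field Fq] {u v : Polynomial Fq}
    (huv : IsCoprime u v) : u * v ∣ 1 - v * modInv v u - u * modInv u v := by
  obtain ⟨k, hk⟩ : ∃ k, modInv v u * v + k * u = 1 := by
    rw [modInv, dif_pos huv.symm]
    exact huv.symm.choose_spec
  obtain ⟨l, hl⟩ : ∃ l, modInv u v * u + l * v = 1 := by
    rw [modInv, dif_pos huv]
    exact huv.choose_spec
  exact huv.mul_dvd ⟨k - modInv u v, by linear_combination -hk⟩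
    ⟨l - modInv v u, by linear_combination -hl⟩

end FF

open FF in
theorem quadSum_multiplicative_general {Fq : Type*} [Field Fq] [Fintype Fq]
    (e : AddChar Fq ℂ) {d : ℕ}
    (B : Matrix (Fin d) (Fin d) (Polynomial Fq))
    (u v : Polynomial Fq) (hu : u ≠ 0) (hv : v ≠ 0)
    (huv : IsCoprime u v)
    (c c' : Fin d → Polynomial Fq) (e₀ : Polynomial Fq) :
    quadSum e B (u * v) c c' e₀ =
      quadSum e B u (fun i => modInv v u * c i) c' e₀ *
        quadSum e B v (fun i => modInv u v * c i) c' e₀ := by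
  have hcrt := mul_dvd_one_sub_modInv huv
  obtain ⟨hv', hu'⟩ := isCoprime_of_mul_dvd_one_sub hcrt
  simp only [quadSum_eq_sum_quadTerm]
  rw [← sum_sum_mul_sum_sum_of_bijective (bijective_modTuple_mul hu hv huv hv' hu')
    (bijective_modTuple_mul hu hv huv isCoprime_one_left isCoprime_one_left)]
  refine Fintype.sum_congr _ _ fun a => Fintype.sum_congr _ _ fun b => ?_
  simp only [one_mul]
  rw [quadTerm_mul e B c c' e₀ hu hv hcrt,
    quadTerm_congr e B _ c' e₀ hu (dvd_sub_polyOf_modTuple hu _)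
      fun _ => dvd_sub_polyOf_modTuple hu _,
    quadTerm_congr e B _ c' e₀ hv (dvd_sub_polyOf_modTuple hv _)
      fun _ => dvd_sub_polyOf_modTuple hv _]

open FF in
/-- multiplicativity of quadratic exponential sums.  Let `G(x) = xᵀBx`
with `B` symmetric over `𝔽_q[t]` of nonzero determinant `D`, and let `r = uv` be coprime
to `D` with `u, v` coprime.  Then `S_r(G,c,c',e₀) = S_u(G, v̄c, c', e₀) S_v(G, ūc, c', e₀)`,
where `v̄` (resp. `ū`) is the inverse of `v` mod `u` (resp. of `u` mod `v`). -/
theorem quadSum_multiplicative {Fq : Type*} [Field Fq] [Fintype Fq]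
    (hq : Odd (Fintype.card Fq)) (e : AddChar Fq ℂ) (he : e ≠ 1) {d : ℕ}
    (B : Matrix (Fin d) (Fin d) (Polynomial Fq)) (hB : B.IsSymm) (hD : B.det ≠ 0)
    (u v : Polynomial Fq) (hu : u ≠ 0) (hv : v ≠ 0)
    (huv : IsCoprime u v) (hrD : IsCoprime (u * v) B.det)
    (c c' : Fin d → Polynomial Fq) (e₀ : Polynomial Fq) :
    quadSum e B (u * v) c c' e₀ =
      quadSum e B u (fun i => modInv v u * c i) c' e₀ *
        quadSum e B v (fun i => modInv u v * c i) c' e₀ :=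
  quadSum_multiplicative_general e B u v hu hv huv c c' e₀
end
end

section
/- (Optimality for sums of squares) Let q be odd, F(x) = x₁² + ⋯ + x_d², g ∈ F_q[t] nonconstant, λ = (1,0,…,0), and f ∈ F_q[t] with f ≡ 1 + 2t^{deg g − 1} g (mod g²). Let Ω = {x ∈ K_∞^d : deg x₁ > deg x_i for all i ≥ 2}. If x ∈ F_q[t]^d ∩ Ω satisfies F(x) = f and x ≡ λ (mod g), then deg f ≥ 4 deg g − 2. In particular, when deg f ≤ 4 deg g − 3, the system has no solution in F_q[t]^d ∩ Ω. -/
/-!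
Common setup: `K_∞ = 𝔽_q((1/t))` is modeled as `LaurentSeries Fq` in the variable `X = 1/t`,
so that an element `Σ_{i ≤ N} a_i t^i` of `K_∞` corresponds to the Hahn series
`Σ_{n ≥ -N} a_{-n} X^n`.  The degree in `t` is the negative of the Hahn-series order,
the absolute value is `|α| = q^{deg_t α}`, and the standard additive character is
`ψ(α) = e_q(coefficient of t^{-1}) = e_q(coefficient of X^1)`.
-/

open scoped BigOperators Classical
noncomputable section



open Polynomial in
theorem main_lemma {Fq : Type*} [Field Fq] [Fintype Fq]
    (hq : Odd (Fintype.card Fq)) {d : ℕ}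
    (g f : Polynomial Fq) (hg : 1 ≤ g.natDegree)
    (hf : g ^ 2 ∣ f - (1 + 2 * Polynomial.X ^ (g.natDegree - 1) * g))
    (x : Fin (d + 1) → Polynomial Fq)
    (hx : ∀ i, i ≠ 0 → (x i).degree < (x 0).degree)
    (hF : (∑ i, x i ^ 2) = f)
    (hmod : g ∣ (x 0 - 1) ∧ ∀ i, i ≠ 0 → g ∣ x i) :
    4 * g.natDegree - 2 ≤ f.natDegree := by
  set m := g.natDegree with hm
  have hgne : g ≠ 0 := Polynomial.ne_zero_of_natDegree_gt (n := 0) (by omega)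
  have h2 : (2 : Fq) ≠ 0 := by
    refine Ring.two_ne_zero ?_
    intro hc
    have := FiniteField.even_card_of_char_two (F := Fq) hc
    obtain ⟨k, hk⟩ := hq
    omega
  obtain ⟨a, ha⟩ := hmod.1
  have hx0 : x 0 = g * a + 1 := by rw [← ha]; ring
  set S : Polynomial Fq := ∑ i : Fin d, x i.succ ^ 2 with hS
  have hsum : (∑ i, x i ^ 2) = x 0 ^ 2 + S := by
    rw [Fin.sum_univ_succ]
  have hSdvd : g ^ 2 ∣ S := by
    refine Finset.dvd_sum fun i _ => ?_
    exact pow_dvd_pow_of_dvd (hmod.2 i.succ (Fin.succ_ne_zero i)) 2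
  set w : Polynomial Fq := a - X ^ (m - 1) with hw
  have key : (2 * w) * g = (f - (1 + 2 * X ^ (m - 1) * g)) - g ^ 2 * a ^ 2 - S := by
    rw [← hF, hsum, hx0, hw]; ring
  have hdvd2 : g * g ∣ (2 * w) * g := by
    rw [key, ← sq]
    exact dvd_sub (dvd_sub hf (Dvd.intro _ rfl)) hSdvd
  have hdvdw2 : g ∣ 2 * w := (mul_dvd_mul_iff_right hgne).mp hdvd2
  have hdvdw : g ∣ w := by
    have hu : IsUnit (2 : Polynomial Fq) := by
      rw [← map_ofNat (Polynomial.C : Fq →+* Polynomial Fq) 2]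
      exact Polynomial.isUnit_C.mpr (isUnit_iff_ne_zero.mpr h2)
    exact hu.dvd_mul_left.mp hdvdw2
  have hXne : (X : Polynomial Fq) ^ (m - 1) ≠ 0 := pow_ne_zero _ X_ne_zero
  have hadeg : m - 1 ≤ a.natDegree ∧ a ≠ 0 := by
    by_cases hw0 : w = 0
    · rw [hw] at hw0
      have haX : a = X ^ (m - 1) := sub_eq_zero.mp hw0
      rw [haX, natDegree_pow, natDegree_X]
      exact ⟨by omega, hXne⟩
    · have hwdeg : m ≤ w.natDegree := natDegree_le_of_dvd hdvdw hw0
      have haw : a = w + X ^ (m - 1) := by rw [hw]; ring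
      have hlt : (X ^ (m - 1) : Polynomial Fq).natDegree < w.natDegree := by
        rw [natDegree_pow, natDegree_X]; omega
      have : a.natDegree = w.natDegree := by
        rw [haw]; exact natDegree_add_eq_left_of_natDegree_lt hlt
      constructor
      · omega
      · refine ne_zero_of_natDegree_gt (n := 0) ?_
        omega
  have hane : a ≠ 0 := hadeg.2
  have hga : (g * a).natDegree = m + a.natDegree := natDegree_mul hgne hane
  have hx0deg : (x 0).natDegree = m + a.natDegree := by
    rw [hx0, natDegree_add_eq_left_of_natDegree_lt, hga]
    rw [hga, natDegree_one]; omega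
  have hx0ne : x 0 ≠ 0 := by
    refine ne_zero_of_natDegree_gt (n := 0) ?_
    omega
  have hx02ne : x 0 ^ 2 ≠ 0 := pow_ne_zero _ hx0ne
  have hSlt : S.degree < (x 0 ^ 2).degree := by
    refine lt_of_le_of_lt (degree_sum_le _ _) ?_
    rw [Finset.sup_lt_iff (by rw [bot_lt_iff_ne_bot, Ne, degree_eq_bot]; exact hx02ne)]
    intro i _
    by_cases hp : x i.succ = 0
    · rw [hp, zero_pow (by norm_num : 2 ≠ 0), degree_zero, bot_lt_iff_ne_bot, Ne,
        degree_eq_bot]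
      exact hx02ne
    · have h1 : (x i.succ).natDegree < (x 0).natDegree :=
        natDegree_lt_natDegree hp (hx i.succ (Fin.succ_ne_zero i))
      calc (x i.succ ^ 2).degree ≤ ((x i.succ ^ 2).natDegree : WithBot ℕ) := degree_le_natDegree
        _ < ((x 0 ^ 2).natDegree : WithBot ℕ) := by
            rw [natDegree_pow, natDegree_pow]
            exact_mod_cast by omega
        _ = (x 0 ^ 2).degree := (degree_eq_natDegree hx02ne).symm
  have hfdeg : f.degree = (x 0 ^ 2).degree := by
    rw [← hF, hsum]
    exact degree_add_eq_left_of_degree_lt hSlt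
  have : f.natDegree = 2 * (x 0).natDegree := by
    rw [natDegree_eq_of_degree_eq hfdeg, natDegree_pow]
  omega

open FF in
/-- optimality for sums of squares.  Let `q` be odd,
`F(x) = x₀² + ⋯ + x_d²`, `g` nonconstant, `λ = (1,0,…,0)`, and `f ≡ 1 + 2t^{deg g − 1} g
(mod g²)`.  If `x ∈ 𝔽_q[t]^{d+1}` lies in the cone `Ω = {deg x₀ > deg x_i, i ≥ 1}` and
satisfies `F(x) = f`, `x ≡ λ (mod g)`, then `deg f ≥ 4 deg g − 2`; in particular if
`deg f ≤ 4 deg g − 3` there is no such solution. -/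
theorem optimality_sum_of_squares {Fq : Type*} [Field Fq] [Fintype Fq]
    (hq : Odd (Fintype.card Fq)) {d : ℕ}
    (g f : Polynomial Fq) (hg : 1 ≤ g.natDegree)
    (hf : g ^ 2 ∣ f - (1 + 2 * Polynomial.X ^ (g.natDegree - 1) * g)) :
    (∀ x : Fin (d + 1) → Polynomial Fq,
      (∀ i, i ≠ 0 → (x i).degree < (x 0).degree) →
      (∑ i, x i ^ 2) = f →
      (g ∣ (x 0 - 1) ∧ ∀ i, i ≠ 0 → g ∣ x i) →
      4 * g.natDegree - 2 ≤ f.natDegree) ∧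
    (f.natDegree ≤ 4 * g.natDegree - 3 →
      ¬ ∃ x : Fin (d + 1) → Polynomial Fq,
        (∀ i, i ≠ 0 → (x i).degree < (x 0).degree) ∧
        (∑ i, x i ^ 2) = f ∧
        (g ∣ (x 0 - 1) ∧ ∀ i, i ≠ 0 → g ∣ x i)) := by
  constructor
  · exact fun x h1 h2 h3 => main_lemma hq g f hg hf x h1 h2 h3
  · rintro hle ⟨x, h1, h2, h3⟩
    have := main_lemma hq g f hg hf x h1 h2 h3
    omega
end
end
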